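/- Let X be a CAT(0) space, C ⊂ X closed convex satisfying dist(π_C(x), [x,y]) ≤ σ for all x ∈ X, y ∈ C. Then for any x ∈ X and y in the ε-neighborhood of C, the first point of intersection of the geodesic [x,y] with the closed (ε+σ)-neighborhood of C lies within distance 3ε + 3σ of π_C(x). -/

import Mathlib

/-! Walk along `[x, y]` to the point `w` with `d(x, w) / d(x, y) = d(x, z) / d(x, q)`, where
`q ∈ C` is `ε`-close to `y` and `z ∈ [x, q]` is `σ`-close to `π_C x`. Convexity of the CAT(0)
metric puts `w` within `d(y, q) < ε` of `z`, so `w` lies in the `(ε + σ)`-neighbourhood of `C`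
and the first entrance time `t₀` is at most `d(x, w)`. Conversely `d(x, π_C x) ≤ t₀ + ε + σ`,
since `π_C x` is a closest point, and `d(x, w)` exceeds `d(x, π_C x)` by at most `ε + σ`;
the triangle inequality through `w` then gives the bound.

Convexity of the metric is derived from the CN inequality: it makes
`l ↦ d(γ (l d(x, y)), γ' (l d(x, q)))` midpoint convex, and a midpoint convex function
bounded above on `[0, 1]` lies below its chord. -/

open Set Metric

def IsGeodesicOn {X : Type*} [MetricSpace X] (γ : ℝ → X) (a b : ℝ) : Prop :=
  ∀ s ∈ Set.Icc a b, ∀ t ∈ Set.Icc a b, dist (γ s) (γ t) = |s - t|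

def GeodFromTo {X : Type*} [MetricSpace X] (γ : ℝ → X) (x y : X) : Prop :=
  IsGeodesicOn γ 0 (dist x y) ∧ γ 0 = x ∧ γ (dist x y) = y

def geodSeg {X : Type*} [MetricSpace X] (γ : ℝ → X) (x y : X) : Set X :=
  γ '' Set.Icc 0 (dist x y)

/-- A CAT(0) space: a geodesic metric space satisfying the CN (Bruhat--Tits)
midpoint inequality, which characterizes CAT(0) among geodesic spaces. -/
class CAT0 (X : Type*) [MetricSpace X] : Prop where
  geodesic : ∀ x y : X, ∃ γ : ℝ → X, GeodFromTo γ x y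
  cn : ∀ x y z m : X, dist y m = dist y z / 2 → dist m z = dist y z / 2 →
    dist x m ^ 2 ≤ (dist x y ^ 2 + dist x z ^ 2) / 2 - dist y z ^ 2 / 4

def GeodConvex {X : Type*} [MetricSpace X] (C : Set X) : Prop :=
  ∀ γ : ℝ → X, ∀ a b : ℝ, a ≤ b → IsGeodesicOn γ a b → γ a ∈ C → γ b ∈ C →
    ∀ t ∈ Set.Icc a b, γ t ∈ C

def IsClosestPointProj {X : Type*} [MetricSpace X] (C : Set X) (p : X → X) : Prop :=
  ∀ x : X, p x ∈ C ∧ ∀ z ∈ C, dist x (p x) ≤ dist x z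

def IsGeodLine {X : Type*} [MetricSpace X] (ℓ : ℝ → X) : Prop :=
  ∀ s t : ℝ, dist (ℓ s) (ℓ t) = |s - t|

theorem nonpos_of_midpoint_le_of_bddAbove {g : ℝ → ℝ}
    (hmid : ∀ a ∈ Icc (0 : ℝ) 1, ∀ b ∈ Icc (0 : ℝ) 1, g ((a + b) / 2) ≤ (g a + g b) / 2)
    (hbdd : BddAbove (g '' Icc 0 1)) (h0 : g 0 ≤ 0) (h1 : g 1 ≤ 0) {t : ℝ}
    (ht : t ∈ Icc (0 : ℝ) 1) : g t ≤ 0 := by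
  set M := sSup (g '' Icc 0 1)
  have hle : ∀ s ∈ Icc (0 : ℝ) 1, g s ≤ M := fun s hs => le_csSup hbdd (mem_image_of_mem g hs)
  -- every point is the midpoint of an endpoint and another point of `[0, 1]`
  have hhalf : ∀ s ∈ Icc (0 : ℝ) 1, g s ≤ M / 2 := by
    rintro s ⟨hs0, hs1⟩
    rcases le_total s (1 / 2) with hs | hs
    · have h := hmid 0 ⟨le_rfl, zero_le_one⟩ (2 * s) ⟨by linarith, by linarith⟩
      rw [show (0 + 2 * s) / 2 = s by ring] at h
      linarith [hle (2 * s) ⟨by linarith, by linarith⟩]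
    · have h := hmid (2 * s - 1) ⟨by linarith, by linarith⟩ 1 ⟨zero_le_one, le_rfl⟩
      rw [show (2 * s - 1 + 1) / 2 = s by ring] at h
      linarith [hle (2 * s - 1) ⟨by linarith, by linarith⟩]
  have hM : M ≤ M / 2 :=
    csSup_le ⟨g 0, mem_image_of_mem g ⟨le_rfl, zero_le_one⟩⟩ (by
      rintro _ ⟨s, hs, rfl⟩
      exact hhalf s hs)
  linarith [hle t ht]

theorem le_chord_of_midpoint_le_of_bddAbove {f : ℝ → ℝ}
    (hmid : ∀ a ∈ Icc (0 : ℝ) 1, ∀ b ∈ Icc (0 : ℝ) 1, f ((a + b) / 2) ≤ (f a + f b) / 2)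
    (hbdd : BddAbove (f '' Icc 0 1)) {t : ℝ} (ht : t ∈ Icc (0 : ℝ) 1) :
    f t ≤ (1 - t) * f 0 + t * f 1 := by
  obtain ⟨M, hM⟩ := hbdd
  have key := nonpos_of_midpoint_le_of_bddAbove (g := fun s => f s - ((1 - s) * f 0 + s * f 1))
    (fun a ha b hb => by linarith [hmid a ha b hb])
    ⟨M + |f 0| + |f 1|, by
      rintro _ ⟨s, hs, rfl⟩
      have := hM ⟨s, hs, rfl⟩
      nlinarith [neg_abs_le (f 0), neg_abs_le (f 1), abs_nonneg (f 0), abs_nonneg (f 1),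
        hs.1, hs.2]⟩
    (by simp) (by simp) ht
  linarith

theorem exists_mul_eq_of_mem_Icc {s d : ℝ} (hs : s ∈ Icc 0 d) :
    ∃ l ∈ Icc (0 : ℝ) 1, l * d = s := by
  rcases (hs.1.trans hs.2).eq_or_lt with hd | hd
  · exact ⟨0, ⟨le_rfl, zero_le_one⟩, by rw [zero_mul]; exact le_antisymm hs.1 (hs.2.trans hd.ge)⟩
  · exact ⟨s / d, ⟨div_nonneg hs.1 hd.le, div_le_one_of_le₀ hs.2 hd.le⟩, div_mul_cancel₀ s hd.ne'⟩

theorem mul_mem_Icc_zero {l d : ℝ} (hl : l ∈ Icc (0 : ℝ) 1) (hd : 0 ≤ d) : l * d ∈ Icc 0 d :=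
  ⟨mul_nonneg hl.1 hd, mul_le_of_le_one_left hd hl.2⟩

theorem ContinuousOn.csInf_sublevel_mem {f : ℝ → ℝ} {a b r : ℝ} (hf : ContinuousOn f (Icc a b))
    (hne : {t | t ∈ Icc a b ∧ f t ≤ r}.Nonempty) :
    sInf {t | t ∈ Icc a b ∧ f t ≤ r} ∈ {t | t ∈ Icc a b ∧ f t ≤ r} :=
  (hf.preimage_isClosed_of_isClosed isClosed_Icc isClosed_Iic).csInf_mem hne
    ⟨a, fun _ ht => ht.1.1⟩

section Geodesics

variable {X : Type*} [MetricSpace X]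

def IsMetricMidpoint (a b m : X) : Prop :=
  dist a m = dist a b / 2 ∧ dist m b = dist a b / 2

theorem IsMetricMidpoint.symm {a b m : X} (h : IsMetricMidpoint a b m) : IsMetricMidpoint b a m :=
  ⟨by rw [dist_comm, h.2, dist_comm], by rw [dist_comm, h.1, dist_comm]⟩

theorem IsClosestPointProj.dist_eq_infDist {C : Set X} {p : X → X} (hp : IsClosestPointProj C p)
    (x : X) : dist x (p x) = infDist x C :=
  le_antisymm ((le_infDist ⟨p x, (hp x).1⟩).2 (hp x).2) (infDist_le_dist_of_mem (hp x).1)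

theorem IsGeodesicOn.lipschitzOnWith {γ : ℝ → X} {a b : ℝ} (h : IsGeodesicOn γ a b) :
    LipschitzOnWith 1 γ (Icc a b) :=
  LipschitzOnWith.of_dist_le_mul fun s hs t ht => by
    rw [h s hs t ht, NNReal.coe_one, one_mul, Real.dist_eq]

namespace GeodFromTo

variable {γ : ℝ → X} {x y : X}

theorem dist_left_apply (hγ : GeodFromTo γ x y) {t : ℝ} (ht : t ∈ Icc 0 (dist x y)) :
    dist x (γ t) = t := by
  calc dist x (γ t) = dist (γ 0) (γ t) := by rw [hγ.2.1]
    _ = t := by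
      rw [hγ.1 0 ⟨le_rfl, dist_nonneg⟩ t ht, zero_sub, abs_neg, abs_of_nonneg ht.1]

theorem dist_apply_right (hγ : GeodFromTo γ x y) {t : ℝ} (ht : t ∈ Icc 0 (dist x y)) :
    dist (γ t) y = dist x y - t := by
  calc dist (γ t) y = dist (γ t) (γ (dist x y)) := by rw [hγ.2.2]
    _ = dist x y - t := by
      rw [hγ.1 t ht _ ⟨dist_nonneg, le_rfl⟩, abs_sub_comm, abs_of_nonneg (sub_nonneg.2 ht.2)]

theorem dist_apply_mul (hγ : GeodFromTo γ x y) {a b : ℝ} (ha : a ∈ Icc (0 : ℝ) 1)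
    (hb : b ∈ Icc (0 : ℝ) 1) :
    dist (γ (a * dist x y)) (γ (b * dist x y)) = |a - b| * dist x y := by
  rw [hγ.1 _ (mul_mem_Icc_zero ha dist_nonneg) _ (mul_mem_Icc_zero hb dist_nonneg), ← sub_mul,
    abs_mul, abs_of_nonneg dist_nonneg]

theorem isMetricMidpoint_apply_mul (hγ : GeodFromTo γ x y) {a b : ℝ} (ha : a ∈ Icc (0 : ℝ) 1)
    (hb : b ∈ Icc (0 : ℝ) 1) :
    IsMetricMidpoint (γ (a * dist x y)) (γ (b * dist x y)) (γ ((a + b) / 2 * dist x y)) := by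
  have hm : (a + b) / 2 ∈ Icc (0 : ℝ) 1 := ⟨by linarith [ha.1, hb.1], by linarith [ha.2, hb.2]⟩
  rw [IsMetricMidpoint, hγ.dist_apply_mul ha hm, hγ.dist_apply_mul hm hb, hγ.dist_apply_mul ha hb,
    show a - (a + b) / 2 = (a - b) / 2 by ring, show (a + b) / 2 - b = (a - b) / 2 by ring,
    abs_div, abs_two]
  constructor <;> ring

theorem exists_dist_apply_mul_le (hγ : GeodFromTo γ x y) {a : X} {r : ℝ}
    (h : infDist a (geodSeg γ x y) ≤ r) : ∃ l ∈ Icc (0 : ℝ) 1, dist a (γ (l * dist x y)) ≤ r := by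
  have hcpt : IsCompact (geodSeg γ x y) :=
    isCompact_Icc.image_of_continuousOn hγ.1.lipschitzOnWith.continuousOn
  obtain ⟨_, ⟨s, hs, rfl⟩, hdist⟩ :=
    hcpt.exists_infDist_eq_dist ⟨γ 0, 0, ⟨le_rfl, dist_nonneg⟩, rfl⟩ a
  obtain ⟨l, hl, rfl⟩ := exists_mul_eq_of_mem_Icc hs
  exact ⟨l, hl, hdist ▸ h⟩

end GeodFromTo

end Geodesics

namespace CAT0

variable {X : Type*} [MetricSpace X] [CAT0 X]

theorem exists_isMetricMidpoint (a b : X) : ∃ m, IsMetricMidpoint a b m := by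
  obtain ⟨γ, hγ⟩ := geodesic a b
  have ht : dist a b / 2 ∈ Icc 0 (dist a b) := ⟨by positivity, by linarith [dist_nonneg (x := a) (y := b)]⟩
  exact ⟨γ (dist a b / 2), hγ.dist_left_apply ht, by rw [hγ.dist_apply_right ht]; ring⟩

theorem dist_le_half_of_isMetricMidpoint {x y z m₁ m₂ : X} (h₁ : IsMetricMidpoint x y m₁)
    (h₂ : IsMetricMidpoint x z m₂) : dist m₁ m₂ ≤ dist y z / 2 := by
  have A := cn m₁ x z m₂ h₂.1 h₂.2
  have B := cn z x y m₁ h₁.1 h₁.2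
  rw [dist_comm m₁ x, h₁.1, dist_comm m₁ z] at A
  rw [dist_comm z x, dist_comm z y] at B
  nlinarith [dist_nonneg (x := y) (y := z), dist_nonneg (x := m₁) (y := m₂)]

theorem dist_le_of_isMetricMidpoint {a₁ b₁ a₂ b₂ m₁ m₂ : X} (h₁ : IsMetricMidpoint a₁ b₁ m₁)
    (h₂ : IsMetricMidpoint a₂ b₂ m₂) : dist m₁ m₂ ≤ (dist a₁ a₂ + dist b₁ b₂) / 2 := by
  obtain ⟨n, hn⟩ := exists_isMetricMidpoint a₁ b₂
  have h₁n : dist m₁ n ≤ dist b₁ b₂ / 2 := dist_le_half_of_isMetricMidpoint h₁ hn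
  have hn₂ : dist n m₂ ≤ dist a₁ a₂ / 2 := dist_le_half_of_isMetricMidpoint hn.symm h₂.symm
  linarith [dist_triangle m₁ n m₂]

theorem dist_apply_mul_le {γ γ' : ℝ → X} {x y z : X} (hγ : GeodFromTo γ x y)
    (hγ' : GeodFromTo γ' x z) {l : ℝ} (hl : l ∈ Icc (0 : ℝ) 1) :
    dist (γ (l * dist x y)) (γ' (l * dist x z)) ≤ l * dist y z := by
  set f : ℝ → ℝ := fun l => dist (γ (l * dist x y)) (γ' (l * dist x z))
  have hbdd : BddAbove (f '' Icc 0 1) := by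
    refine ⟨dist x y + dist x z, ?_⟩
    rintro _ ⟨l, hl, rfl⟩
    have hy := hγ.dist_left_apply (mul_mem_Icc_zero hl dist_nonneg)
    have hz := hγ'.dist_left_apply (mul_mem_Icc_zero hl dist_nonneg)
    linarith [dist_triangle_left (γ (l * dist x y)) (γ' (l * dist x z)) x,
      mul_le_of_le_one_left (dist_nonneg (x := x) (y := y)) hl.2,
      mul_le_of_le_one_left (dist_nonneg (x := x) (y := z)) hl.2]
  have h := le_chord_of_midpoint_le_of_bddAbove (f := f)
    (fun a ha b hb => dist_le_of_isMetricMidpoint (hγ.isMetricMidpoint_apply_mul ha hb)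
      (hγ'.isMetricMidpoint_apply_mul ha hb)) hbdd hl
  simpa [f, hγ.2.1, hγ.2.2, hγ'.2.1, hγ'.2.2] using h

end CAT0

theorem first_entrance_point_near_proj_general
    {X : Type*} [MetricSpace X] [CAT0 X]
    (C : Set X)
    (p : X → X) (hp : IsClosestPointProj C p)
    (σ : ℝ)
    (hproj : ∀ x : X, ∀ y ∈ C, ∀ γ : ℝ → X, GeodFromTo γ x y →
      Metric.infDist (p x) (geodSeg γ x y) ≤ σ)
    (ε : ℝ)
    (x y : X) (hy : Metric.infDist y C < ε)
    (γ : ℝ → X) (hγ : GeodFromTo γ x y) :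
    dist (γ (sInf {t : ℝ | t ∈ Set.Icc 0 (dist x y) ∧ Metric.infDist (γ t) C ≤ ε + σ})) (p x)
      ≤ 3 * ε + 3 * σ := by
  set S := {t : ℝ | t ∈ Set.Icc 0 (dist x y) ∧ Metric.infDist (γ t) C ≤ ε + σ}
  obtain ⟨q, hqC, hyq⟩ := (infDist_lt_iff ⟨p x, (hp x).1⟩).1 hy
  obtain ⟨γ', hγ'⟩ := CAT0.geodesic x q
  obtain ⟨l, hl, hpz⟩ := hγ'.exists_dist_apply_mul_le (hproj x q hqC γ' hγ')
  have hwp : dist (γ (l * dist x y)) (p x) ≤ dist y q + σ := by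
    linarith [dist_triangle_right (γ (l * dist x y)) (p x) (γ' (l * dist x q)),
      CAT0.dist_apply_mul_le hγ hγ' hl, mul_le_of_le_one_left (dist_nonneg (x := y) (y := q)) hl.2]
  have hwS : l * dist x y ∈ S :=
    ⟨mul_mem_Icc_zero hl dist_nonneg, (infDist_le_dist_of_mem (hp x).1).trans (by linarith)⟩
  have ht₀S : sInf S ∈ S := ((continuous_infDist_pt C).comp_continuousOn
    hγ.1.lipschitzOnWith.continuousOn).csInf_sublevel_mem ⟨_, hwS⟩
  have ht₀w : sInf S ≤ l * dist x y := csInf_le ⟨0, fun _ ht => ht.1.1⟩ hwS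
  set t₀ := sInf S
  have hxp : dist x (p x) ≤ t₀ + (ε + σ) := by
    rw [hp.dist_eq_infDist, ← hγ.dist_left_apply ht₀S.1]
    linarith [infDist_le_infDist_add_dist (s := C) (x := x) (y := γ t₀), ht₀S.2]
  have hxz : l * dist x q ≤ dist x (p x) + σ := by
    rw [← hγ'.dist_left_apply (mul_mem_Icc_zero hl dist_nonneg)]
    linarith [dist_triangle x (p x) (γ' (l * dist x q))]
  have hlxy : l * dist x y ≤ l * dist x q + dist y q := by
    nlinarith [dist_triangle_right x y q, hl.1, hl.2, dist_nonneg (x := y) (y := q)]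
  calc dist (γ t₀) (p x) ≤ dist (γ t₀) (γ (l * dist x y)) + dist (γ (l * dist x y)) (p x) :=
        dist_triangle _ _ _
    _ = l * dist x y - t₀ + dist (γ (l * dist x y)) (p x) := by
        rw [hγ.1 _ ht₀S.1 _ hwS.1, abs_sub_comm, abs_of_nonneg (sub_nonneg.2 ht₀w)]
    _ ≤ 3 * ε + 3 * σ := by linarith

/-- Proposition 3.3(2): if `C` satisfies the projection condition with constant `σ`,
`x ∈ X` and `y` lies in the `ε`-neighborhood of `C`, then the first point of
intersection of the geodesic `[x,y]` with the closed `(ε+σ)`-neighborhood of `C`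
lies within distance `3ε + 3σ` of `π_C x`. -/
theorem first_entrance_point_near_proj
    {X : Type*} [MetricSpace X] [CAT0 X]
    (C : Set X) (hclosed : IsClosed C) (hconv : GeodConvex C) (hCne : C.Nonempty)
    (p : X → X) (hp : IsClosestPointProj C p)
    (σ : ℝ) (hσ : 0 ≤ σ)
    (hproj : ∀ x : X, ∀ y ∈ C, ∀ γ : ℝ → X, GeodFromTo γ x y →
      Metric.infDist (p x) (geodSeg γ x y) ≤ σ)
    (ε : ℝ) (hε : 0 < ε)
    (x y : X) (hy : Metric.infDist y C < ε)
    (γ : ℝ → X) (hγ : GeodFromTo γ x y) :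
    dist (γ (sInf {t : ℝ | t ∈ Set.Icc 0 (dist x y) ∧ Metric.infDist (γ t) C ≤ ε + σ})) (p x)
      ≤ 3 * ε + 3 * σ :=
  first_entrance_point_near_proj_general C p hp σ hproj ε x y hy γ hγ
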